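/- For every odd integer s and every positive integer l, the second derivative of the Fibonacci polynomial satisfies F''_{3·2^l}(s) ≡ 0 (mod 2^{l+1}) and F''_{3·2^l+1}(s) ≡ 2^l (mod 2^{l+1}); moreover, the sequence m ↦ F''_m(s) (mod 2^{l+1}) is periodic of period 3·2^{l+1}. -/

import Mathlib

open Polynomial

noncomputable def fibPoly : ℕ → Polynomial ℤ
  | 0 => 0
  | 1 => 1
  | n + 2 => X * fibPoly (n + 1) + fibPoly n

/-!
Let `s` be odd, `K = 2 ^ k` and `N = 3 * 2 ^ k` with `k ≥ 1`. Then `F_N(s)`, `F'_N(s)`, `F''_N(s)`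
are odd multiples of `4K`, `2K`, `2K`, and `F_{N+1}(s) - 1`, `F'_{N+1}(s)`, `F''_{N+1}(s)` are odd
multiples of `2K`, `K`, `K`. This is checked directly for `N = 6`, and the doubling formulas
`F_{2N} = F_N (2 F_{N+1} - x F_N)` and `F_{2N+1} = F_{N+1}^2 + F_N^2` carry it from `N` to `2N`.
The two congruences are read off, and differentiating the addition formula
`F_{m+N+1} = F_{m+1} F_{N+1} + F_m F_N` twice shows that `N` is a period of `F''(s)` modulo `K`.

The gcd of two periods is a period, so a shorter period would make `3 * 2 ^ l` or `2 ^ (l + 1)` a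
period modulo `2 ^ (l + 1)`. The first contradicts `F''_{3·2^l+1}(s) ≡ 2^l`; the second, together
with the period `12` modulo `4`, makes `4` a period modulo `4`, but `F''_4(s) = 6s ≢ 0 = F''_0(s)`.
-/

open Function

theorem fibPoly_add_two (n : ℕ) : fibPoly (n + 2) = X * fibPoly (n + 1) + fibPoly n := rfl

theorem fibPoly_add (m n : ℕ) :
    fibPoly (m + n + 1) = fibPoly (m + 1) * fibPoly (n + 1) + fibPoly m * fibPoly n := by
  induction n generalizing m with
  | zero => simp [fibPoly]
  | succ n ih =>
    rw [show m + (n + 1) + 1 = m + 1 + n + 1 by ring, ih, fibPoly_add_two, fibPoly_add_two]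
    ring

theorem fibPoly_two_mul (n : ℕ) :
    fibPoly (2 * n) = fibPoly n * (2 * fibPoly (n + 1) - X * fibPoly n) := by
  cases n with
  | zero => simp [fibPoly]
  | succ n =>
    rw [show 2 * (n + 1) = n + 1 + n + 1 by ring, fibPoly_add, fibPoly_add_two]
    ring

theorem fibPoly_two_mul_add_one (n : ℕ) :
    fibPoly (2 * n + 1) = fibPoly (n + 1) ^ 2 + fibPoly n ^ 2 := by
  rw [two_mul, fibPoly_add]
  ring

theorem Function.Periodic.nat_gcd {α : Type*} {f : ℕ → α} {p q : ℕ} (hp : Periodic f p)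
    (hq : Periodic f q) : Periodic f (p.gcd q) := by
  rcases Nat.eq_zero_or_pos q with rfl | hq0
  · simpa using hp
  rcases (Nat.gcd_le_right p hq0).lt_or_eq with hlt | heq
  · obtain ⟨m, -, hm⟩ := Nat.exists_mul_mod_eq_gcd hlt
    have hpm : p.gcd q + p * m / q * q = m * p := by
      rw [← hm, mul_comm m p]
      exact Nat.mod_add_div' (p * m) q
    intro x
    calc f (x + p.gcd q) = f (x + p.gcd q + p * m / q * q) := (hq.nat_mul _ _).symm
      _ = f (x + m * p) := by rw [add_assoc, hpm]
      _ = f x := hp.nat_mul m x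
  · rwa [heq]

theorem Function.Periodic.of_dvd {α : Type*} {f : ℕ → α} {d n : ℕ} (h : Periodic f d)
    (hdn : d ∣ n) : Periodic f n := by
  obtain ⟨c, rfl⟩ := hdn
  simpa [mul_comm] using h.nat_mul c

theorem Nat.dvd_three_mul_two_pow_succ {d j : ℕ} (h : d ∣ 3 * 2 ^ (j + 1)) :
    d = 3 * 2 ^ (j + 1) ∨ d ∣ 3 * 2 ^ j ∨ d ∣ 2 ^ (j + 1) := by
  obtain ⟨y, z, hy, hz, rfl⟩ := Nat.dvd_mul.1 h
  obtain ⟨i, hi, rfl⟩ := (Nat.dvd_prime_pow Nat.prime_two).1 hz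
  rcases (Nat.dvd_prime Nat.prime_three).1 hy with rfl | rfl
  · simp [hz]
  · rcases hi.lt_or_eq with hlt | rfl
    · exact Or.inr (Or.inl (mul_dvd_mul_left 3 (pow_dvd_pow 2 (Nat.lt_succ_iff.1 hlt))))
    · exact Or.inl rfl

theorem Function.Periodic.three_mul_two_pow_succ_le {α : Type*} {f : ℕ → α} {j p : ℕ}
    (hf : Periodic f (3 * 2 ^ (j + 1))) (h3 : ¬ Periodic f (3 * 2 ^ j))
    (h2 : ¬ Periodic f (2 ^ (j + 1))) (hp : Periodic f p) (hp0 : 0 < p) :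
    3 * 2 ^ (j + 1) ≤ p := by
  have hgcd := hp.nat_gcd hf
  rcases Nat.dvd_three_mul_two_pow_succ (Nat.gcd_dvd_right p _) with heq | hdvd | hdvd
  · exact Nat.le_of_dvd hp0 (heq ▸ Nat.gcd_dvd_left p _)
  · exact absurd (hgcd.of_dvd hdvd) h3
  · exact absurd (hgcd.of_dvd hdvd) h2

theorem periodic_intCast_iff_modEq {f : ℕ → ℤ} {q p : ℕ} :
    Periodic (fun m => (f m : ZMod q)) p ↔ ∀ m, f (m + p) ≡ f m [ZMOD q] :=
  forall_congr' fun _ => ZMod.intCast_eq_intCast_iff _ _ _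

theorem Int.two_pow_not_modEq_zero (l : ℕ) : ¬ (2 : ℤ) ^ l ≡ 0 [ZMOD 2 ^ (l + 1)] := by
  rw [Int.ModEq, Int.emod_eq_of_lt (by positivity) (pow_lt_pow_right₀ one_lt_two l.lt_succ_self),
    Int.zero_emod]
  exact pow_ne_zero l two_ne_zero

theorem Odd.exists_sq_eq_eight_mul_add_one {s : ℤ} (hs : Odd s) : ∃ v, s ^ 2 = 8 * v + 1 := by
  obtain ⟨t, rfl⟩ := hs
  obtain ⟨v, hv⟩ := Int.even_mul_succ_self t
  exact ⟨v, by linear_combination 4 * hv⟩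

def IsOddMultiple (c x : ℤ) : Prop := ∃ a, Odd a ∧ x = c * a

theorem IsOddMultiple.modEq {c x : ℤ} (h : IsOddMultiple c x) : x ≡ c [ZMOD 2 * c] := by
  obtain ⟨a, ⟨r, rfl⟩, rfl⟩ := h
  calc c * (2 * r + 1) = c + 2 * c * r := by ring
    _ ≡ c [ZMOD 2 * c] := Int.modEq_add_fac_self

theorem IsOddMultiple.modEq_zero {c x : ℤ} (h : IsOddMultiple c x) : x ≡ 0 [ZMOD c] := by
  obtain ⟨a, -, rfl⟩ := h
  exact Int.modEq_zero_iff_dvd.2 (dvd_mul_right c a)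

structure FibTwoAdicShape (s K : ℤ) (n : ℕ) : Prop where
  fib : IsOddMultiple (4 * K) ((fibPoly n).eval s)
  deriv : IsOddMultiple (2 * K) ((derivative (fibPoly n)).eval s)
  deriv2 : IsOddMultiple (2 * K) ((derivative (derivative (fibPoly n))).eval s)
  fib_succ : IsOddMultiple (2 * K) ((fibPoly (n + 1)).eval s - 1)
  deriv_succ : IsOddMultiple K ((derivative (fibPoly (n + 1))).eval s)
  deriv2_succ : IsOddMultiple K ((derivative (derivative (fibPoly (n + 1)))).eval s)

namespace FibTwoAdicShape

variable {s K : ℤ} {n : ℕ}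

theorem double (hK : Even K) (h : FibTwoAdicShape s K n) :
    FibTwoAdicShape s (2 * K) (2 * n) := by
  obtain ⟨a, ha, hA⟩ := h.fib
  obtain ⟨b, hb, hB⟩ := h.deriv
  obtain ⟨c, hc, hC⟩ := h.deriv2
  obtain ⟨d, hd, hD⟩ := h.fib_succ
  obtain ⟨e, he, hE⟩ := h.deriv_succ
  obtain ⟨f, hf, hF⟩ := h.deriv2_succ
  rw [sub_eq_iff_eq_add] at hD
  have hodd (x : ℤ) : Odd (2 * (K * x) + 1) := odd_two_mul_add_one _
  refine ⟨⟨a * (2 * (K * (d - s * a)) + 1), ha.mul (hodd _), ?_⟩,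
    ⟨b * (2 * (K * (d - s * a)) + 1) + 2 * (K * a * (e - 2 * a - s * b)),
      (hb.mul (hodd _)).add_even (even_two_mul _), ?_⟩,
    ⟨c * (2 * (K * (d - s * a)) + 1)
        + 2 * (K * (b * (e - 2 * a - s * b) + a * (f - 2 * b - s * c))),
      (hc.mul (hodd _)).add_even (even_two_mul _), ?_⟩,
    ⟨d + K * (d ^ 2 + 4 * a ^ 2), hd.add_even (hK.mul_right _), ?_⟩,
    ⟨e + 2 * (K * (d * e + 4 * a * b)), he.add_even (even_two_mul _), ?_⟩,
    ⟨f + K * (e ^ 2 + 2 * d * f + 4 * b ^ 2 + 8 * a * c), hf.add_even (hK.mul_right _), ?_⟩⟩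
  all_goals
    simp only [fibPoly_two_mul, fibPoly_two_mul_add_one, sq, derivative_mul, derivative_sub,
      derivative_add, derivative_X, derivative_ofNat, derivative_zero, derivative_one, eval_mul,
      eval_sub, eval_add, eval_X, eval_ofNat, eval_one, eval_zero, hA, hB, hC, hD, hE, hF]
    ring

theorem periodic (h : FibTwoAdicShape s K n) (m : ℕ) :
    (derivative (derivative (fibPoly (m + n)))).eval s ≡
      (derivative (derivative (fibPoly m))).eval s [ZMOD K] := by
  obtain ⟨a, -, hA⟩ := h.fib
  obtain ⟨b, -, hB⟩ := h.deriv
  obtain ⟨c, -, hC⟩ := h.deriv2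
  obtain ⟨d, -, hD⟩ := h.fib_succ
  obtain ⟨e, -, hE⟩ := h.deriv_succ
  obtain ⟨f, -, hF⟩ := h.deriv2_succ
  rw [sub_eq_iff_eq_add] at hD
  cases m with
  | zero =>
    rw [zero_add, hC]
    simp only [fibPoly, derivative_zero, eval_zero]
    exact Int.modEq_zero_iff_dvd.2 ⟨2 * c, by ring⟩
  | succ m =>
    rw [Nat.add_right_comm, fibPoly_add]
    simp only [derivative_add, derivative_mul, eval_add, eval_mul, hA, hB, hC, hD, hE, hF]
    set F₀ := (fibPoly m).eval s
    set F₁ := (fibPoly (m + 1)).eval s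
    set D₀ := (derivative (fibPoly m)).eval s
    set D₁ := (derivative (fibPoly (m + 1))).eval s
    set E₀ := (derivative (derivative (fibPoly m))).eval s
    set E₁ := (derivative (derivative (fibPoly (m + 1)))).eval s
    calc _ = E₁ + K * (2 * d * E₁ + 2 * e * D₁ + f * F₁
            + 4 * a * E₀ + 4 * b * D₀ + 2 * c * F₀) := by ring
      _ ≡ E₁ [ZMOD K] := Int.modEq_add_fac_self

end FibTwoAdicShape

theorem fibTwoAdicShape_six {s : ℤ} (hs : Odd s) : FibTwoAdicShape s 2 6 := by
  obtain ⟨v, hv⟩ := hs.exists_sq_eq_eight_mul_add_one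
  have hodd (x : ℤ) : Odd (2 * x + 1) := odd_two_mul_add_one x
  refine ⟨⟨s * (2 * (2 * v) + 1) * (2 * v + 1), (hs.mul (hodd _)).mul (hodd _), ?_⟩,
    ⟨2 * (40 * v ^ 2 + 22 * v + 2) + 1, hodd _, ?_⟩,
    ⟨s * (2 * (20 * v + 5) + 1), hs.mul (hodd _), ?_⟩,
    ⟨(2 * (4 * v) + 1) * (2 * (4 * v + 1) + 1) * (2 * v + 1),
      ((hodd _).mul (hodd _)).mul (hodd _), ?_⟩,
    ⟨s * (2 * (96 * v ^ 2 + 64 * v + 9) + 1), hs.mul (hodd _), ?_⟩,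
    ⟨2 * (480 * v ^ 2 + 240 * v + 25) + 1, hodd _, ?_⟩⟩ <;>
  simp only [fibPoly, derivative_add, derivative_mul, derivative_X, derivative_one, eval_add,
    eval_mul, eval_X, eval_one, one_mul, mul_one, add_zero]
  -- each coefficient is the quotient of the difference of the two sides by `s ^ 2 - (8 * v + 1)`
  · linear_combination s * (s ^ 2 + 8 * v + 5) * hv
  · linear_combination (5 * s ^ 2 + 40 * v + 17) * hv
  · linear_combination 20 * s * hv
  · linear_combination
      (s ^ 4 + s ^ 2 * (8 * v + 1) + (8 * v + 1) ^ 2 + 5 * s ^ 2 + 5 * (8 * v + 1) + 6) * hv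
  · linear_combination 2 * s * (3 * s ^ 2 + 24 * v + 13) * hv
  · linear_combination 2 * (15 * s ^ 2 + 120 * v + 45) * hv

theorem fibTwoAdicShape_three_mul_two_pow {s : ℤ} (hs : Odd s) {k : ℕ} (hk : 1 ≤ k) :
    FibTwoAdicShape s (2 ^ k) (3 * 2 ^ k) := by
  induction k, hk using Nat.le_induction with
  | base => simpa using fibTwoAdicShape_six hs
  | succ k hk ih =>
    rw [pow_succ', pow_succ', mul_left_comm]
    exact ih.double (Int.even_pow.2 ⟨even_two, by omega⟩)

theorem fibPoly_deriv2_not_periodic_two_pow {s : ℤ} (hs : Odd s) {j : ℕ} (hj : 2 ≤ j) :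
    ¬ ∀ m, (derivative (derivative (fibPoly (m + 2 ^ j)))).eval s ≡
      (derivative (derivative (fibPoly m))).eval s [ZMOD 2 ^ j] := by
  intro h
  set F₂ : ℕ → ℤ := fun m => (derivative (derivative (fibPoly m))).eval s
  have h4 : Periodic (fun m => (F₂ m : ZMod 4)) (2 ^ j) :=
    periodic_intCast_iff_modEq.2 fun m => (h m).of_dvd (pow_dvd_pow 2 hj)
  have h12 : Periodic (fun m => (F₂ m : ZMod 4)) 12 :=
    periodic_intCast_iff_modEq.2 (fibTwoAdicShape_three_mul_two_pow hs one_le_two).periodic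
  have hgcd : Nat.gcd (2 ^ j) 12 = 4 := by
    obtain ⟨i, rfl⟩ := Nat.exists_eq_add_of_le' hj
    rw [pow_add, mul_comm, show 12 = 2 ^ 2 * 3 by rfl, Nat.gcd_mul_left,
      Nat.Coprime.pow_left i (by norm_num : Nat.Coprime 2 3)]
    rfl
  have h0 := periodic_intCast_iff_modEq.1 (hgcd ▸ h4.nat_gcd h12) 0
  simp only [F₂, zero_add, fibPoly, derivative_add, derivative_mul, derivative_X, derivative_one,
    derivative_zero, eval_add, eval_mul, eval_X, eval_one, eval_zero, one_mul, mul_one, add_zero,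
    Nat.cast_ofNat] at h0
  obtain ⟨t, rfl⟩ := hs
  unfold Int.ModEq at h0
  omega

theorem fibPoly_second_deriv_eval_odd (s : ℤ) (hs : Odd s) (l : ℕ) (hl : 1 ≤ l) :
    (derivative (derivative (fibPoly (3 * 2 ^ l)))).eval s ≡ 0 [ZMOD (2 : ℤ) ^ (l + 1)] ∧
    (derivative (derivative (fibPoly (3 * 2 ^ l + 1)))).eval s ≡ 2 ^ l
      [ZMOD (2 : ℤ) ^ (l + 1)] ∧
    (∀ m : ℕ, (derivative (derivative (fibPoly (m + 3 * 2 ^ (l + 1))))).eval s ≡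
      (derivative (derivative (fibPoly m))).eval s [ZMOD (2 : ℤ) ^ (l + 1)]) ∧
    (∀ p : ℕ, 0 < p →
      (∀ m : ℕ, (derivative (derivative (fibPoly (m + p)))).eval s ≡
        (derivative (derivative (fibPoly m))).eval s [ZMOD (2 : ℤ) ^ (l + 1)]) →
      3 * 2 ^ (l + 1) ≤ p) := by
  have hshape := fibTwoAdicShape_three_mul_two_pow hs hl
  have hval₀ := hshape.deriv2.modEq_zero
  have hval₁ := hshape.deriv2_succ.modEq
  rw [← pow_succ'] at hval₀ hval₁
  have hper := (fibTwoAdicShape_three_mul_two_pow hs (Nat.le_succ_of_le hl)).periodic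
  refine ⟨hval₀, hval₁, hper, fun p hp hpPeriod => ?_⟩
  have hcast : ((2 ^ (l + 1) : ℕ) : ℤ) = 2 ^ (l + 1) := by push_cast; rfl
  refine Periodic.three_mul_two_pow_succ_le
    (f := fun m => (((derivative (derivative (fibPoly m))).eval s : ℤ) : ZMod (2 ^ (l + 1))))
    ?_ ?_ ?_ ?_ hp <;> rw [periodic_intCast_iff_modEq, hcast]
  · exact hper
  · intro h
    have h1 := hval₁.symm.trans (add_comm 1 (3 * 2 ^ l) ▸ h 1)
    simp only [fibPoly, derivative_one, derivative_zero, eval_zero] at h1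
    exact Int.two_pow_not_modEq_zero l h1
  · exact fibPoly_deriv2_not_periodic_two_pow hs (by omega)
  · exact hpPeriod
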